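/- Fix n ≥ 1 and s ∈ (0,1). Let u : ℝⁿ → ℝ be bounded and continuous. Then for every x₀ ∈ ℝⁿ, the convolution K_y ∗ u(x₀) = ∫_{ℝⁿ} K_y(x₀ − x) u(x) dx converges to u(x₀) as y → 0⁺; that is, the Poisson-type extension attains the boundary datum u continuously on {y = 0}. -/

import Mathlib

/-!
Since `K_y(x) = y^{-n} K_1(x / y)`, the substitution `x = x₀ - y z` turns the extension into
`∫ K_1(z) u(x₀ - y z) dz`, which tends to `u(x₀) ∫ K_1` by dominated convergence with dominating
function `M |K_1|`. The constant `C_{n,s}` is exactly the one making `∫ K_1 = 1`: in polar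
coordinates, followed by `t = r² / (1 + r²)`, the integral `∫ (1 + |x|²)^{-(n/2+s)} dx` becomes
the Beta integral `B(n/2, s)`, so it equals `π^{n/2} Γ(s) / Γ(n/2 + s)`.
-/

open MeasureTheory Real Filter

noncomputable def poissonTypeKernel (n : ℕ) (s : ℝ) (y : ℝ) (x : EuclideanSpace ℝ (Fin n)) : ℝ :=
  (Real.Gamma (s + n / 2) / (Real.pi ^ ((n : ℝ) / 2) * Real.Gamma s))
    * y ^ (2 * s) / (‖x‖ ^ 2 + y ^ 2) ^ ((n : ℝ) / 2 + s)

open Topology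

theorem integral_Ioo_rpow_mul_one_sub_rpow {a b : ℝ} (ha : 0 < a) (hb : 0 < b) :
    ∫ x in Set.Ioo (0 : ℝ) 1, x ^ (a - 1) * (1 - x) ^ (b - 1) =
      Gamma a * Gamma b / Gamma (a + b) := by
  have hbeta : Complex.betaIntegral a b
      = ((∫ x in Set.Ioo (0 : ℝ) 1, x ^ (a - 1) * (1 - x) ^ (b - 1) : ℝ) : ℂ) := by
    rw [Complex.betaIntegral, intervalIntegral.integral_of_le zero_le_one,
      integral_Ioc_eq_integral_Ioo, ← integral_complex_ofReal]
    refine setIntegral_congr_fun measurableSet_Ioo fun x hx => ?_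
    push_cast [Complex.ofReal_cpow hx.1.le, Complex.ofReal_cpow (sub_nonneg.2 hx.2.le)]
    rfl
  have h := Complex.betaIntegral_eq_Gamma_mul_div a b (by simpa using ha) (by simpa using hb)
  rw [hbeta, ← Complex.ofReal_add, Complex.Gamma_ofReal, Complex.Gamma_ofReal,
    Complex.Gamma_ofReal] at h
  exact_mod_cast h

theorem integral_Ioi_rpow_mul_one_add_sq_rpow {a b : ℝ} (ha : 0 < a) (hb : 0 < b) :
    ∫ r in Set.Ioi (0 : ℝ), r ^ (2 * a - 1) * (1 + r ^ 2) ^ (-(a + b)) =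
      Gamma a * Gamma b / (2 * Gamma (a + b)) := by
  set φ : ℝ → ℝ := fun r => r ^ 2 / (1 + r ^ 2)
  have himage : φ '' Set.Ioi 0 = Set.Ioo 0 1 := by
    ext x
    constructor
    · rintro ⟨r, hr : 0 < r, rfl⟩
      have h1 : (0 : ℝ) < 1 + r ^ 2 := by positivity
      exact ⟨by positivity, by rw [div_lt_one h1]; linarith⟩
    · rintro ⟨hx0, hx1⟩
      have hx : 0 < x / (1 - x) := div_pos hx0 (by linarith)
      refine ⟨√(x / (1 - x)), sqrt_pos.2 hx, ?_⟩
      have h1x : 1 - x ≠ 0 := by linarith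
      simp only [φ, sq_sqrt hx.le]
      field_simp
      ring
  have hinj : Set.InjOn φ (Set.Ioi 0) := by
    intro r (hr : 0 < r) t (ht : 0 < t) h
    rw [div_eq_div_iff (by positivity) (by positivity)] at h
    nlinarith
  have hderiv : ∀ r ∈ Set.Ioi (0 : ℝ),
      HasDerivWithinAt φ (2 * r / (1 + r ^ 2) ^ 2) (Set.Ioi 0) r := by
    intro r _
    have h := (hasDerivAt_pow 2 r).div ((hasDerivAt_const r (1 : ℝ)).add (hasDerivAt_pow 2 r))
      (by simp only [Pi.add_apply]; positivity)
    exact (h.congr_deriv (by simp only [Pi.add_apply]; ring)).hasDerivWithinAt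
  have hintegrand : ∀ r ∈ Set.Ioi (0 : ℝ),
      |2 * r / (1 + r ^ 2) ^ 2| • (φ r ^ (a - 1) * (1 - φ r) ^ (b - 1)) =
        2 * (r ^ (2 * a - 1) * (1 + r ^ 2) ^ (-(a + b))) := by
    intro r (hr : 0 < r)
    have hP : 0 < 1 + r ^ 2 := by positivity
    have h1φ : 1 - φ r = (1 + r ^ 2)⁻¹ := by simp only [φ]; field_simp; ring
    set P := 1 + r ^ 2
    have hr' : r ^ (2 * a - 1) = r * (r ^ 2) ^ (a - 1) := by
      rw [← rpow_natCast_mul hr.le, show 2 * a - 1 = 1 + (2 : ℕ) * (a - 1) by push_cast; ring,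
        rpow_add hr, rpow_one]
    have hP' : P ^ (-(a + b)) = (P ^ (a - 1) * P ^ (b - 1) * P ^ 2)⁻¹ := by
      rw [← rpow_add hP, ← rpow_add_natCast hP.ne', ← rpow_neg hP.le]
      ring_nf
    rw [smul_eq_mul, h1φ, abs_of_pos (by positivity), div_rpow (by positivity) hP.le,
      inv_rpow hP.le, hr', hP']
    field_simp
  have hsubst := integral_image_eq_integral_abs_deriv_smul measurableSet_Ioi hderiv hinj
    (fun x => x ^ (a - 1) * (1 - x) ^ (b - 1))
  rw [himage, integral_Ioo_rpow_mul_one_sub_rpow ha hb,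
    setIntegral_congr_fun measurableSet_Ioi hintegrand, integral_const_mul] at hsubst
  have hG : Gamma (a + b) ≠ 0 := (Gamma_pos_of_pos (by linarith)).ne'
  rw [div_eq_iff hG] at hsubst
  rw [eq_div_iff (mul_ne_zero two_ne_zero hG), hsubst]
  ring

theorem integral_one_add_norm_sq_rpow_neg {E : Type*} [NormedAddCommGroup E]
    [InnerProductSpace ℝ E] [FiniteDimensional ℝ E] [MeasurableSpace E] [BorelSpace E]
    [Nontrivial E] {s : ℝ} (hs : 0 < s) :
    ∫ x : E, (1 + ‖x‖ ^ 2) ^ (-(Module.finrank ℝ E / 2 + s)) =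
      π ^ (Module.finrank ℝ E / 2 : ℝ) * Gamma s / Gamma (Module.finrank ℝ E / 2 + s) := by
  set d := Module.finrank ℝ E with hd_def
  have hd : 0 < d := Module.finrank_pos
  clear_value d
  have hradial : ∫ t in Set.Ioi (0 : ℝ), t ^ (d - 1) • (1 + t ^ 2) ^ (-(d / 2 + s)) =
      Gamma (d / 2) * Gamma s / (2 * Gamma (d / 2 + s)) := by
    rw [← integral_Ioi_rpow_mul_one_add_sq_rpow (by positivity) hs]
    refine setIntegral_congr_fun measurableSet_Ioi fun t _ => ?_
    rw [smul_eq_mul, show 2 * ((d : ℝ) / 2) - 1 = ((d - 1 : ℕ) : ℝ) by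
      push_cast [Nat.cast_sub hd]; ring, rpow_natCast]
  have hsqrt : √π ^ d = π ^ (d / 2 : ℝ) := by
    rw [sqrt_eq_rpow, ← rpow_natCast, ← rpow_mul pi_pos.le]
    ring_nf
  have hGd : 0 < Gamma (d / 2) := Gamma_pos_of_pos (by positivity)
  have hGds : 0 < Gamma (d / 2 + s) := Gamma_pos_of_pos (by positivity)
  rw [integral_fun_norm_addHaar volume (fun t => (1 + t ^ 2) ^ (-(d / 2 + s))),
    measureReal_def, InnerProductSpace.volume_ball, ← hd_def, hradial, ENNReal.ofReal_one,
    one_pow, one_mul, ENNReal.toReal_ofReal (by positivity), Gamma_add_one (by positivity), hsqrt,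
    nsmul_eq_mul, smul_eq_mul]
  field_simp

theorem tendsto_integral_mul_comp_sub_smul {E : Type*} [NormedAddCommGroup E]
    [NormedSpace ℝ E] [MeasurableSpace E] [OpensMeasurableSpace E] {μ : Measure E} {φ : E → ℝ}
    (hφ : Integrable φ μ) (hφ_one : ∫ z, φ z ∂μ = 1) {u : E → ℝ} (hu : Continuous u)
    {M : ℝ} (hM : ∀ x, |u x| ≤ M) (x₀ : E) :
    Tendsto (fun y : ℝ => ∫ z, φ z * u (x₀ - y • z) ∂μ) (𝓝 0) (𝓝 (u x₀)) := by
  have h : Tendsto (fun y : ℝ => ∫ z, φ z * u (x₀ - y • z) ∂μ) (𝓝 0)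
      (𝓝 (∫ z, φ z * u x₀ ∂μ)) := by
    refine tendsto_integral_filter_of_dominated_convergence (fun z => M * |φ z|)
      (.of_forall fun y => ?_) (.of_forall fun y => .of_forall fun z => ?_)
      (hφ.abs.const_mul M) (.of_forall fun z => ?_)
    · have hcont : Continuous fun z => u (x₀ - y • z) := by fun_prop
      exact hφ.aestronglyMeasurable.mul hcont.aestronglyMeasurable
    · rw [norm_mul, Real.norm_eq_abs, Real.norm_eq_abs, mul_comm]
      exact mul_le_mul_of_nonneg_right (hM _) (abs_nonneg _)
    · have hpath : Tendsto (fun y : ℝ => x₀ - y • z) (𝓝 0) (𝓝 x₀) := by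
        have hcont : Continuous fun y : ℝ => x₀ - y • z := by fun_prop
        simpa using hcont.tendsto 0
      exact ((hu.tendsto x₀).comp hpath).const_mul (φ z)
  rwa [integral_mul_const, hφ_one, one_mul] at h

section PoissonTypeKernel

variable {n : ℕ} {s : ℝ}

theorem poissonTypeKernel_one_apply (x : EuclideanSpace ℝ (Fin n)) :
    poissonTypeKernel n s 1 x = Gamma (s + n / 2) / (π ^ ((n : ℝ) / 2) * Gamma s) *
      (1 + ‖x‖ ^ 2) ^ (-((n : ℝ) / 2 + s)) := by
  rw [poissonTypeKernel, one_rpow, one_pow, mul_one, add_comm (‖x‖ ^ 2),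
    rpow_neg (by positivity), div_eq_mul_inv]

theorem integrable_poissonTypeKernel_one (hs : 0 < s) :
    Integrable (poissonTypeKernel n s 1) := by
  have hdim : (Module.finrank ℝ (EuclideanSpace ℝ (Fin n)) : ℝ) < n + 2 * s := by
    rw [finrank_euclideanSpace_fin]
    linarith
  refine ((integrable_rpow_neg_one_add_norm_sq (μ := volume) hdim).const_mul
    (Gamma (s + n / 2) / (π ^ ((n : ℝ) / 2) * Gamma s))).congr (.of_forall fun x => ?_)
  rw [poissonTypeKernel_one_apply, show -((n : ℝ) + 2 * s) / 2 = -(n / 2 + s) by ring]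

theorem integral_poissonTypeKernel_one (hn : 1 ≤ n) (hs : 0 < s) :
    ∫ x, poissonTypeKernel n s 1 x = 1 := by
  have : Nontrivial (EuclideanSpace ℝ (Fin n)) :=
    Module.nontrivial_of_finrank_pos (R := ℝ) (by rw [finrank_euclideanSpace_fin]; omega)
  have h := integral_one_add_norm_sq_rpow_neg (E := EuclideanSpace ℝ (Fin n)) hs
  rw [finrank_euclideanSpace_fin] at h
  have hGs : 0 < Gamma s := Gamma_pos_of_pos hs
  have hGns : 0 < Gamma (n / 2 + s) := Gamma_pos_of_pos (by positivity)
  simp_rw [poissonTypeKernel_one_apply]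
  rw [integral_const_mul, h, add_comm s]
  field_simp

theorem poissonTypeKernel_smul {y : ℝ} (hy : 0 < y) (z : EuclideanSpace ℝ (Fin n)) :
    y ^ n * poissonTypeKernel n s y (y • z) = poissonTypeKernel n s 1 z := by
  have hz : 0 < ‖z‖ ^ 2 + 1 := by positivity
  have hden : (‖y • z‖ ^ 2 + y ^ 2) ^ ((n : ℝ) / 2 + s) =
      y ^ n * y ^ (2 * s) * (‖z‖ ^ 2 + 1) ^ ((n : ℝ) / 2 + s) := by
    rw [norm_smul, norm_of_nonneg hy.le,
      show (y * ‖z‖) ^ 2 + y ^ 2 = y ^ 2 * (‖z‖ ^ 2 + 1) by ring, mul_rpow (by positivity) hz.le,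
      ← rpow_natCast_mul hy.le, ← rpow_natCast y n, ← rpow_add hy]
    ring_nf
  have hys : 0 < y ^ (2 * s) := rpow_pos_of_pos hy _
  rw [poissonTypeKernel, poissonTypeKernel, hden, one_rpow, one_pow]
  field_simp

theorem integral_poissonTypeKernel_sub_mul (u : EuclideanSpace ℝ (Fin n) → ℝ)
    (x₀ : EuclideanSpace ℝ (Fin n)) {y : ℝ} (hy : 0 < y) :
    ∫ x, poissonTypeKernel n s y (x₀ - x) * u x =
      ∫ z, poissonTypeKernel n s 1 z * u (x₀ - y • z) := by
  calc ∫ x, poissonTypeKernel n s y (x₀ - x) * u x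
      = ∫ x, poissonTypeKernel n s y x * u (x₀ - x) := by
        simpa using integral_sub_left_eq_self (μ := volume)
          (fun x => poissonTypeKernel n s y x * u (x₀ - x)) x₀
    _ = y ^ n * ∫ z, poissonTypeKernel n s y (y • z) * u (x₀ - y • z) := by
        rw [Measure.integral_comp_smul_of_nonneg volume
          (fun x => poissonTypeKernel n s y x * u (x₀ - x)) y (hR := hy.le),
          finrank_euclideanSpace_fin, smul_eq_mul, mul_inv_cancel_left₀ (by positivity)]
    _ = ∫ z, poissonTypeKernel n s 1 z * u (x₀ - y • z) := by
        simp_rw [← integral_const_mul, ← mul_assoc, poissonTypeKernel_smul hy]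

end PoissonTypeKernel

/-- For bounded continuous `u : ℝⁿ → ℝ` and every `x₀ ∈ ℝⁿ`, the
convolution `K_y ∗ u(x₀) = ∫_{ℝⁿ} K_y(x₀ − x) u(x) dx` converges to `u(x₀)` as
`y → 0⁺`: the Poisson-type extension attains the boundary datum `u` continuously. -/
theorem poisson_extension_tendsto_boundary_datum
    (n : ℕ) (hn : 1 ≤ n) (s : ℝ) (hs : s ∈ Set.Ioo (0 : ℝ) 1)
    (u : EuclideanSpace ℝ (Fin n) → ℝ) (hu_cont : Continuous u)
    (hu_bdd : ∃ M : ℝ, ∀ x, |u x| ≤ M)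
    (x₀ : EuclideanSpace ℝ (Fin n)) :
    Tendsto (fun y : ℝ => ∫ x : EuclideanSpace ℝ (Fin n), poissonTypeKernel n s y (x₀ - x) * u x)
      (nhdsWithin 0 (Set.Ioi 0)) (nhds (u x₀)) := by
  obtain ⟨M, hM⟩ := hu_bdd
  have h := tendsto_integral_mul_comp_sub_smul (integrable_poissonTypeKernel_one hs.1)
    (integral_poissonTypeKernel_one hn hs.1) hu_cont hM x₀
  refine (h.mono_left nhdsWithin_le_nhds).congr' ?_
  filter_upwards [self_mem_nhdsWithin] with y (hy : 0 < y)
  exact (integral_poissonTypeKernel_sub_mul u x₀ hy).symm
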